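/- arXiv:1509.02845 — 3 statements merged into one kernel-verified Lean document; each statement's English description precedes it below -/
import Mathlib

section
/- Let G be a finite group, k a field of characteristic p, H ≤ G a subgroup of index n coprime to p, and φ : M → N a map of kG-modules. If the restriction of φ to H equals γ ∘ β with β : M|_H → T and γ : T → N|_H for some kH-module T, then the composition of the adjoint maps M → T↑G → N (where T↑G = kG ⊗_{kH} T) equals n·φ. -/
theorem Subgroup.card_eq_index_of_existsUnique_inv_mul_mem {G : Type*} [Group G]
    {H : Subgroup G} {S : Finset G} (hS : ∀ g : G, ∃! s, s ∈ S ∧ s⁻¹ * g ∈ H) :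
    S.card = H.index := by
  have hcompl : Subgroup.IsComplement (S : Set G) (H : Set G) := by
    rw [Subgroup.isComplement_iff_existsUnique_inv_mul_mem]
    intro g
    obtain ⟨s, ⟨hsS, hsH⟩, huniq⟩ := hS g
    exact ⟨⟨s, hsS⟩, hsH, fun t ht => Subtype.ext (huniq t ⟨t.2, ht⟩)⟩
  simpa using hcompl.card_left

theorem Representation.apply_map_inv_apply_of_comm {k G M N : Type*} [CommSemiring k]
    [Group G] [AddCommMonoid M] [Module k M] [AddCommMonoid N] [Module k N]
    {ρM : Representation k G M} {ρN : Representation k G N} {φ : M →ₗ[k] N}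
    (hφ : ∀ (g : G) (m : M), φ (ρM g m) = ρN g (φ m)) (g : G) (m : M) :
    ρN g (φ (ρM g⁻¹ m)) = φ m := by
  rw [hφ, ← Module.End.mul_apply, ← map_mul, mul_inv_cancel, map_one, Module.End.one_apply]

theorem stmt_1_general (k : Type) [Field k]
    (G : Type) [Group G] (H : Subgroup G)
    (S : Finset G) (hS : ∀ g : G, ∃! s, s ∈ S ∧ s⁻¹ * g ∈ H)
    (M N T : Type) [AddCommGroup M] [Module k M] [AddCommGroup N] [Module k N]
    [AddCommGroup T] [Module k T]
    (ρM : Representation k G M) (ρN : Representation k G N)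
    (φ : M →ₗ[k] N) (hφ : ∀ (g : G) (m : M), φ (ρM g m) = ρN g (φ m))
    (β : M →ₗ[k] T)
    (γ : T →ₗ[k] N)
    (hfact : γ.comp β = φ) :
    ∀ m : M, ∑ s ∈ S, ρN s (γ (β (ρM s⁻¹ m))) = (H.index : k) • φ m := by
  intro m
  have hterm : ∀ s ∈ S, ρN s (γ (β (ρM s⁻¹ m))) = φ m := fun s _ => by
    rw [← LinearMap.comp_apply γ β, hfact, Representation.apply_map_inv_apply_of_comm hφ]
  rw [Finset.sum_congr rfl hterm, Finset.sum_const,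
    Subgroup.card_eq_index_of_existsUnique_inv_mul_mem hS, Nat.cast_smul_eq_nsmul]

/-- Let `H ≤ G` have index `n` coprime to `p`, and let `S` be a left transversal of `H` in
`G`. If the restriction to `H` of `φ : M → N` factors as `γ ∘ β` through a `kH`-module `T`,
then the composite of the adjoint maps `M → T↑G → N`, namely
`m ↦ ∑_{s ∈ S} s·γ(β(s⁻¹·m))` (with `β̂(m) = ∑ s ⊗ β(s⁻¹ m)` and `γ̂(g ⊗ t) = g·γ(t)`),
equals `n · φ`. -/
theorem stmt_1 (p : ℕ) [Fact p.Prime] (k : Type) [Field k] [CharP k p]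
    (G : Type) [Group G] [Fintype G] (H : Subgroup G) (hn : Nat.Coprime H.index p)
    (S : Finset G) (hS : ∀ g : G, ∃! s, s ∈ S ∧ s⁻¹ * g ∈ H)
    (M N T : Type) [AddCommGroup M] [Module k M] [AddCommGroup N] [Module k N]
    [AddCommGroup T] [Module k T]
    (ρM : Representation k G M) (ρN : Representation k G N) (ρT : Representation k ↥H T)
    (φ : M →ₗ[k] N) (hφ : ∀ (g : G) (m : M), φ (ρM g m) = ρN g (φ m))
    (β : M →ₗ[k] T) (hβ : ∀ (h : ↥H) (m : M), β (ρM ↑h m) = ρT h (β m))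
    (γ : T →ₗ[k] N) (hγ : ∀ (h : ↥H) (t : T), γ (ρT h t) = ρN ↑h (γ t))
    (hfact : γ.comp β = φ) :
    ∀ m : M, ∑ s ∈ S, ρN s (γ (β (ρM s⁻¹ m))) = (H.index : k) • φ m :=
  stmt_1_general k G H S hS M N T ρM ρN φ hφ β γ hfact
end

section
/- Let G be a finite group, k a field of characteristic p, and H a proper subgroup of a p-group G (or more generally any proper subgroup whose index is divisible by p). Then every direct summand of a kG-module induced from H has k-dimension divisible by p. -/
open Module

section Induction

variable {k : Type} [CommRing k] {G : Type} [Group G] (H : Subgroup G)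
variable {V : Type} [AddCommGroup V] [Module k V]

/-- The induced module `V↑G` of a `kH`-module `V`, realized as the space of functions
`f : G → V` with `f(hg) = h·f(g)`; for finite index this is (naturally isomorphic to)
`kG ⊗_{kH} V`. -/
def indSpace (ρ : Representation k ↥H V) : Submodule k (G → V) where
  carrier := {f | ∀ (h : ↥H) (g : G), f (↑h * g) = ρ h (f g)}
  add_mem' := fun {a b} ha hb => by
    intro h g
    simp only [Pi.add_apply, ha h g, hb h g, map_add]
  zero_mem' := by intro h g; simp
  smul_mem' := fun c {a} ha => by
    intro h g
    simp only [Pi.smul_apply, ha h g, map_smul]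

/-- The `G`-action on the induced module: `(g' • f)(g) = f (g g')`. -/
def indRep (ρ : Representation k ↥H V) : Representation k G ↥(indSpace H ρ) where
  toFun g' :=
    { toFun := fun f => ⟨fun g => (f : G → V) (g * g'), fun h x => by
        simpa [mul_assoc] using f.2 h (x * g')⟩
      map_add' := fun a b => Subtype.ext rfl
      map_smul' := fun c a => Subtype.ext rfl }
  map_one' := LinearMap.ext fun f => Subtype.ext (funext fun g => by simp)
  map_mul' := fun a b => LinearMap.ext fun f => Subtype.ext (funext fun g => by
    simp [mul_assoc])

/-- Evaluation at `g` as a linear map from the induced module to `V`. -/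
def evMap (ρ : Representation k ↥H V) (g : G) : ↥(indSpace H ρ) →ₗ[k] V :=
  (LinearMap.proj g).comp (indSpace H ρ).subtype

open Classical in
/-- Insertion of `V` as the functions supported on the coset `Hg`. -/
noncomputable def insMap (ρ : Representation k ↥H V) (g : G) : V →ₗ[k] ↥(indSpace H ρ) where
  toFun v := ⟨fun x => if hx : x * g⁻¹ ∈ H then ρ ⟨x * g⁻¹, hx⟩ v else 0, by
    intro h x
    by_cases hx : x * g⁻¹ ∈ H
    · have h1 : (↑h * x) * g⁻¹ ∈ H := by
        rw [mul_assoc]; exact H.mul_mem h.2 hx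
      simp only [dif_pos hx, dif_pos h1]
      have he : (⟨(↑h * x) * g⁻¹, h1⟩ : ↥H) = h * ⟨x * g⁻¹, hx⟩ := by
        ext; simp [mul_assoc]
      rw [he, map_mul]; rfl
    · have h1 : ¬ ((↑h * x) * g⁻¹ ∈ H) := by
        intro hc
        apply hx
        have := H.mul_mem (H.inv_mem h.2) hc
        simpa [mul_assoc] using this
      simp only [dif_neg hx, dif_neg h1, map_zero]⟩
  map_add' a b := Subtype.ext (funext fun x => by
    by_cases hx : x * g⁻¹ ∈ H <;> simp [hx])
  map_smul' c a := Subtype.ext (funext fun x => by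
    by_cases hx : x * g⁻¹ ∈ H <;> simp [hx])

lemma insMap_shift (ρ : Representation k ↥H V) (g : G) (v : V) :
    insMap H ρ g v = indRep H ρ g⁻¹ (insMap H ρ 1 v) := by
  apply Subtype.ext
  funext x
  show _ = (insMap H ρ 1 v : G → V) (x * g⁻¹)
  simp only [insMap, LinearMap.coe_mk, AddHom.coe_mk]
  by_cases hx : x * g⁻¹ ∈ H
  · rw [dif_pos hx, dif_pos (show x * g⁻¹ * 1⁻¹ ∈ H by simpa using hx)]
    congr 1
    ext
    simp
  · rw [dif_neg hx, dif_neg (show ¬ x * g⁻¹ * 1⁻¹ ∈ H by simpa using hx)]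

end Induction

/-- Let `G` be a finite group, `k` of characteristic `p`, and `H` a proper subgroup whose
index is divisible by `p` (e.g. any proper subgroup of a `p`-group). Then every direct
summand `W` of a module induced from `H` has `k`-dimension divisible by `p`. -/
theorem stmt_2 (p : ℕ) [Fact p.Prime] (k : Type) [Field k] [CharP k p]
    (G : Type) [Group G] [Fintype G] (H : Subgroup G) (hH : H ≠ ⊤) (hind : p ∣ H.index)
    (V : Type) [AddCommGroup V] [Module k V] [FiniteDimensional k V]
    (ρV : Representation k ↥H V)
    (W : Type) [AddCommGroup W] [Module k W] (ρW : Representation k G W)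
    (s : W →ₗ[k] ↥(indSpace H ρV)) (r : ↥(indSpace H ρV) →ₗ[k] W)
    (hs : ∀ (g : G) (w : W), s (ρW g w) = indRep H ρV g (s w))
    (hr : ∀ (g : G) (f : ↥(indSpace H ρV)), r (indRep H ρV g f) = ρW g (r f))
    (hrs : r.comp s = LinearMap.id) :
    p ∣ finrank k W := by
  classical
  have hrs' : ∀ w, r (s w) = w := fun w => LinearMap.congr_fun hrs w
  haveI : FiniteDimensional k W :=
    FiniteDimensional.of_injective s (Function.LeftInverse.injective hrs')
  set e : ↥(indSpace H ρV) →ₗ[k] ↥(indSpace H ρV) := s.comp r with he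
  have hcomm : ∀ (g : G) f, e (indRep H ρV g f) = indRep H ρV g (e f) := by
    intro g f
    simp only [he, LinearMap.comp_apply, hr, hs]
  -- the quotient by right cosets
  haveI : Fintype (Quotient (QuotientGroup.rightRel H)) := Fintype.ofFinite _
  -- decomposition of identity
  have hdecomp :
      ∑ c : Quotient (QuotientGroup.rightRel H),
        (insMap H ρV (Quotient.out c)).comp (evMap H ρV (Quotient.out c)) =
      (LinearMap.id : ↥(indSpace H ρV) →ₗ[k] ↥(indSpace H ρV)) := by
    apply LinearMap.ext
    intro f
    apply Subtype.ext
    funext x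
    have hx : ((∑ c : Quotient (QuotientGroup.rightRel H),
        (insMap H ρV (Quotient.out c)).comp (evMap H ρV (Quotient.out c))) f : G → V) x =
        ∑ c : Quotient (QuotientGroup.rightRel H),
          ((insMap H ρV (Quotient.out c)) ((f : G → V) (Quotient.out c)) : G → V) x := by
      rw [LinearMap.sum_apply]
      rw [show ((∑ c : Quotient (QuotientGroup.rightRel H),
        ((insMap H ρV (Quotient.out c)).comp (evMap H ρV (Quotient.out c))) f : ↥(indSpace H ρV)) : G → V)
        = ∑ c : Quotient (QuotientGroup.rightRel H),
          (((insMap H ρV (Quotient.out c)).comp (evMap H ρV (Quotient.out c))) f : G → V) from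
        Submodule.coe_sum _ _ _]
      rw [Finset.sum_apply]
      rfl
    rw [hx]
    have hterm : ∀ c : Quotient (QuotientGroup.rightRel H),
        ((insMap H ρV (Quotient.out c)) ((f : G → V) (Quotient.out c)) : G → V) x =
        if c = Quotient.mk _ x then (f : G → V) x else 0 := by
      intro c
      show (if hx : x * (Quotient.out c)⁻¹ ∈ H then
          ρV ⟨x * (Quotient.out c)⁻¹, hx⟩ ((f : G → V) (Quotient.out c)) else 0) = _
      by_cases hc : x * (Quotient.out c)⁻¹ ∈ H
      · have hcq : c = Quotient.mk _ x := by
          rw [← Quotient.out_eq c]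
          exact Quotient.sound (QuotientGroup.rightRel_apply.mpr hc)
        rw [dif_pos hc, if_pos hcq]
        have := f.2 ⟨x * (Quotient.out c)⁻¹, hc⟩ (Quotient.out c)
        rw [← this]
        congr 1
        simp [mul_assoc]
      · rw [dif_neg hc, if_neg]
        intro hcq
        apply hc
        have : (QuotientGroup.rightRel H) (Quotient.out c) x := by
          rw [← @Quotient.eq _ (QuotientGroup.rightRel H)]
          rw [Quotient.out_eq, hcq]
        exact QuotientGroup.rightRel_apply.mp this
    simp only [hterm]
    simp
  -- block maps are all equal
  have hblock : ∀ g : G,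
      (evMap H ρV g).comp (e.comp (insMap H ρV g)) =
      (evMap H ρV 1).comp (e.comp (insMap H ρV 1)) := by
    intro g
    apply LinearMap.ext
    intro v
    simp only [LinearMap.comp_apply]
    rw [insMap_shift, hcomm]
    show ((indRep H ρV g⁻¹ (e (insMap H ρV 1 v))) : G → V) g = _
    show ((e (insMap H ρV 1 v)) : G → V) (g * g⁻¹) = ((e (insMap H ρV 1 v)) : G → V) 1
    rw [mul_inv_cancel]
  -- trace of e is index • trace of block 1, which is 0
  have htre : LinearMap.trace k _ e = 0 := by
    have h1 : e = ∑ c : Quotient (QuotientGroup.rightRel H),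
        e.comp ((insMap H ρV (Quotient.out c)).comp (evMap H ρV (Quotient.out c))) := by
      apply LinearMap.ext
      intro f
      rw [LinearMap.sum_apply]
      calc e f = e ((∑ c : Quotient (QuotientGroup.rightRel H),
            (insMap H ρV (Quotient.out c)).comp (evMap H ρV (Quotient.out c))) f) := by
              rw [hdecomp]; rfl
        _ = _ := by rw [LinearMap.sum_apply, map_sum]; rfl
    rw [h1, map_sum]
    have h2 : ∀ c : Quotient (QuotientGroup.rightRel H),
        LinearMap.trace k _ (e.comp ((insMap H ρV (Quotient.out c)).comp (evMap H ρV (Quotient.out c)))) =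
        LinearMap.trace k V ((evMap H ρV 1).comp (e.comp (insMap H ρV 1))) := by
      intro c
      rw [← LinearMap.comp_assoc, LinearMap.trace_comp_comm']
      rw [← LinearMap.comp_assoc, ← hblock (Quotient.out c)]
      rw [LinearMap.comp_assoc]
    simp only [h2]
    rw [Finset.sum_const, Finset.card_univ, nsmul_eq_mul]
    have hcard : Fintype.card (Quotient (QuotientGroup.rightRel H)) = H.index := by
      rw [← Nat.card_eq_fintype_card,
        Nat.card_congr (QuotientGroup.quotientRightRelEquivQuotientLeftRel H)]
      rfl
    rw [hcard]
    obtain ⟨c, hc⟩ := hind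
    rw [hc]
    push_cast
    rw [CharP.cast_eq_zero k p]
    ring
  -- conclude
  have hfin : ((finrank k W : k)) = 0 := by
    rw [← LinearMap.trace_id k W, ← hrs, LinearMap.trace_comp_comm', ← he, htre]
  exact (CharP.cast_eq_zero_iff k p _).mp hfin
end

section
/- Let G be a finite group, k a field of characteristic p dividing |G|, and suppose 0 → Ω²(M) → X → M → 0 is an almost split (Auslander–Reiten) sequence of kG-modules ending in an indecomposable nonprojective module M. If Q ≤ G is a subgroup such that M is not a direct summand of (M|_Q)↑G, then the sequence splits on restriction to Q. -/
open Module

section Aux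

open scoped Classical

universe u

variable {k : Type} [CommRing k] {G : Type} [Group G] [Fintype G] (Q : Subgroup G)
variable {M : Type} [AddCommGroup M] [Module k M] (ρM : Representation k G M)

noncomputable instance auxFintypeQuot : Fintype (Quotient (QuotientGroup.rightRel Q)) :=
  @Fintype.ofFinite _ (Quotient.finite _)

lemma aux_term_eq (f : ↥(indSpace Q (ρM.comp Q.subtype))) {g1 g2 : G}
    (h : QuotientGroup.rightRel Q g1 g2) :
    ρM g1⁻¹ ((f : G → M) g1) = ρM g2⁻¹ ((f : G → M) g2) := by
  rw [QuotientGroup.rightRel_apply] at h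
  have hf := f.2 ⟨g2 * g1⁻¹, h⟩ g1
  simp only [MonoidHom.comp_apply, Subgroup.coe_subtype] at hf
  have h2 : g2 * g1⁻¹ * g1 = g2 := by group
  rw [h2] at hf
  rw [hf]
  show ρM g1⁻¹ ((f : G → M) g1) = ρM g2⁻¹ (ρM (g2 * g1⁻¹) ((f : G → M) g1))
  rw [← Module.End.mul_apply, ← map_mul]
  congr 2
  group

/-- The counit `(M|_Q)↑G → M`, given by summing `ρM(t⁻¹) f(t)` over a transversal. -/
noncomputable def counit : ↥(indSpace Q (ρM.comp Q.subtype)) →ₗ[k] M where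
  toFun f := ∑ x : Quotient (QuotientGroup.rightRel Q),
      ρM (Quotient.out x)⁻¹ ((f : G → M) (Quotient.out x))
  map_add' a b := by
    simp only [Submodule.coe_add, Pi.add_apply, map_add]
    exact Finset.sum_add_distrib
  map_smul' c a := by
    simp only [SetLike.val_smul, Pi.smul_apply, map_smul, RingHom.id_apply]
    exact (Finset.smul_sum).symm

lemma counit_mk (f : ↥(indSpace Q (ρM.comp Q.subtype))) (g0 : G) :
    ρM (Quotient.out (Quotient.mk (QuotientGroup.rightRel Q) g0))⁻¹
      ((f : G → M) (Quotient.out (Quotient.mk (QuotientGroup.rightRel Q) g0)))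
    = ρM g0⁻¹ ((f : G → M) g0) :=
  aux_term_eq Q ρM f (Quotient.mk_out g0)

lemma counit_equivariant (a : G) (f : ↥(indSpace Q (ρM.comp Q.subtype))) :
    counit Q ρM (indRep Q (ρM.comp Q.subtype) a f) = ρM a (counit Q ρM f) := by
  have hφ : Function.Bijective
      (fun x : Quotient (QuotientGroup.rightRel Q) =>
        Quotient.mk (QuotientGroup.rightRel Q) (Quotient.out x * a)) := by
    rw [← Finite.injective_iff_bijective]
    intro x y hxy
    have h : QuotientGroup.rightRel Q (Quotient.out x * a) (Quotient.out y * a) :=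
      Quotient.exact hxy
    rw [QuotientGroup.rightRel_apply] at h
    have h' : Quotient.out y * (Quotient.out x)⁻¹ ∈ Q := by
      have h2 : Quotient.out y * a * (Quotient.out x * a)⁻¹
          = Quotient.out y * (Quotient.out x)⁻¹ := by group
      rwa [h2] at h
    calc x = Quotient.mk _ (Quotient.out x) := (Quotient.out_eq x).symm
      _ = Quotient.mk _ (Quotient.out y) :=
          Quotient.sound ((QuotientGroup.rightRel_apply).mpr h')
      _ = y := Quotient.out_eq y
  unfold counit
  simp only [LinearMap.coe_mk, AddHom.coe_mk]
  rw [map_sum (ρM a)]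
  refine Fintype.sum_bijective _ hφ _ _ (fun x => ?_)
  show ρM (Quotient.out x)⁻¹ ((f : G → M) (Quotient.out x * a)) = _
  rw [counit_mk Q ρM f (Quotient.out x * a)]
  rw [← Module.End.mul_apply, ← map_mul]
  congr 2
  group

/-- The unit `M → (M|_Q)↑G|_Q`. -/
noncomputable def unitMap : M →ₗ[k] ↥(indSpace Q (ρM.comp Q.subtype)) where
  toFun m := ⟨fun g => if g ∈ Q then ρM g m else 0, by
    intro h g
    by_cases hgQ : g ∈ Q
    · have h1 : (↑h * g) ∈ Q := Q.mul_mem h.2 hgQ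
      simp only [hgQ, if_true, h1, if_true, map_mul, MonoidHom.comp_apply,
        Subgroup.coe_subtype, Module.End.mul_apply]
    · have h1 : (↑h * g) ∉ Q := by
        rwa [Q.mul_mem_cancel_left h.2]
      simp [hgQ, h1]⟩
  map_add' a b := Subtype.ext (funext fun g => by
    show (if g ∈ Q then ρM g (a + b) else 0)
        = (if g ∈ Q then ρM g a else 0) + (if g ∈ Q then ρM g b else 0)
    split_ifs <;> simp)
  map_smul' c a := Subtype.ext (funext fun g => by
    show (if g ∈ Q then ρM g (c • a) else 0) = c • (if g ∈ Q then ρM g a else 0)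
    split_ifs <;> simp)

lemma unitMap_equivariant (q : ↥Q) (m : M) :
    unitMap Q ρM (ρM ↑q m) = indRep Q (ρM.comp Q.subtype) ↑q (unitMap Q ρM m) := by
  refine Subtype.ext (funext fun g => ?_)
  show (if g ∈ Q then ρM g (ρM ↑q m) else 0) = (if g * ↑q ∈ Q then ρM (g * ↑q) m else 0)
  rw [Q.mul_mem_cancel_right q.2]
  split_ifs with hgQ
  · rw [map_mul]; rfl
  · rfl

lemma counit_unitMap (m : M) : counit Q ρM (unitMap Q ρM m) = m := by
  unfold counit unitMap
  simp only [LinearMap.coe_mk, AddHom.coe_mk]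
  have key : ∀ x : Quotient (QuotientGroup.rightRel Q),
      Quotient.out x ∈ Q ↔ x = Quotient.mk (QuotientGroup.rightRel Q) (1 : G) := by
    intro x
    constructor
    · intro hx
      calc x = Quotient.mk _ (Quotient.out x) := (Quotient.out_eq x).symm
        _ = Quotient.mk _ (1 : G) := Quotient.sound
            ((QuotientGroup.rightRel_apply).mpr (by simpa using inv_mem hx))
    · intro hx
      have h : QuotientGroup.rightRel Q
          (Quotient.out (Quotient.mk (QuotientGroup.rightRel Q) (1 : G))) (1 : G) :=
        Quotient.mk_out (1 : G)
      rw [QuotientGroup.rightRel_apply] at h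
      rw [hx]
      simpa using h
  rw [Finset.sum_eq_single (Quotient.mk (QuotientGroup.rightRel Q) (1 : G))]
  · show ρM _⁻¹ (if _ ∈ Q then _ else 0) = m
    rw [if_pos ((key _).mpr rfl)]
    rw [← Module.End.mul_apply, ← map_mul]
    simp
  · intro x _ hx
    show ρM _⁻¹ (if _ ∈ Q then _ else 0) = 0
    rw [if_neg (fun hc => hx ((key x).mp hc)), map_zero]
  · intro hx
    exact absurd (Finset.mem_univ _) hx

variable {V : Type} [AddCommGroup V] [Module k V]

/-- Transport of a representation along `ULift`. -/
def uliftRep (ρ : Representation k G V) : Representation k G (ULift.{u} V) where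
  toFun a := (ULift.moduleEquiv.symm.toLinearMap.comp (ρ a)).comp
      ULift.moduleEquiv.toLinearMap
  map_one' := by ext x; simp
  map_mul' a b := by ext x; simp

lemma uliftRep_apply (ρ : Representation k G V) (a : G) (x : ULift.{u} V) :
    uliftRep ρ a x = ULift.up (ρ a x.down) := rfl

end Aux

/-- Let `0 → Ω²(M) → X → M → 0` be an almost split sequence of `kG`-modules ending in an
indecomposable nonprojective module `M` (the almost split property: every map `L → M` that
is not a split epimorphism lifts through `X → M`). If `Q ≤ G` is a subgroup such that `M`
is not a direct summand of `(M|_Q)↑G`, then the sequence splits on restriction to `Q`. -/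
theorem stmt_18 (p : ℕ) [Fact p.Prime] (k : Type) [Field k] [CharP k p]
    (G : Type) [Group G] [Fintype G] (hpG : p ∣ Fintype.card G)
    (Ω2M X M : Type) [AddCommGroup Ω2M] [Module k Ω2M] [AddCommGroup X] [Module k X]
    [AddCommGroup M] [Module k M]
    [FiniteDimensional k Ω2M] [FiniteDimensional k X] [FiniteDimensional k M]
    (ρΩ : Representation k G Ω2M) (ρX : Representation k G X) (ρM : Representation k G M)
    (f : Ω2M →ₗ[k] X) (hf : ∀ (g : G) (m : Ω2M), f (ρΩ g m) = ρX g (f m))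
    (g : X →ₗ[k] M) (hg : ∀ (a : G) (x : X), g (ρX a x) = ρM a (g x))
    (hinj : Function.Injective f) (hsurj : Function.Surjective g)
    (hexact : Function.Exact f g)
    (hMindec : ∀ A B : Submodule (MonoidAlgebra k G) ρM.asModule, IsCompl A B → A = ⊥ ∨ B = ⊥)
    (hMnonproj : ¬ Module.Projective (MonoidAlgebra k G) ρM.asModule)
    (halmost : ∀ (L : ModuleCat k) (ρL : Representation k G L) (θ : L →ₗ[k] M),
      (∀ (a : G) (x : L), θ (ρL a x) = ρM a (θ x)) →
      ¬ (∃ σ : M →ₗ[k] L, (∀ (a : G) (m : M), σ (ρM a m) = ρL a (σ m)) ∧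
          θ.comp σ = LinearMap.id) →
      ∃ μ : L →ₗ[k] X, (∀ (a : G) (x : L), μ (ρL a x) = ρX a (μ x)) ∧ g.comp μ = θ)
    (Q : Subgroup G)
    (hns : ¬ ∃ (s : M →ₗ[k] ↥(indSpace Q (ρM.comp Q.subtype)))
        (r : ↥(indSpace Q (ρM.comp Q.subtype)) →ₗ[k] M),
        (∀ (a : G) (m : M), s (ρM a m) = indRep Q (ρM.comp Q.subtype) a (s m)) ∧
        (∀ (a : G) (x : ↥(indSpace Q (ρM.comp Q.subtype))),
          r (indRep Q (ρM.comp Q.subtype) a x) = ρM a (r x)) ∧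
        r.comp s = LinearMap.id) :
    ∃ σ : M →ₗ[k] X, (∀ (q : ↥Q) (m : M), σ (ρM ↑q m) = ρX ↑q (σ m)) ∧
      g.comp σ = LinearMap.id := by
  classical
  let ρQ := ρM.comp Q.subtype
  let Lsub := indSpace Q ρQ
  let e : ULift.{_} ↥Lsub ≃ₗ[k] ↥Lsub := ULift.moduleEquiv
  obtain ⟨μ, hμ, hgμ⟩ :=
    halmost (ModuleCat.of k (ULift ↥Lsub)) (uliftRep (indRep Q ρQ))
      ((counit Q ρM).comp e.toLinearMap)
      (fun a x => by
        simp only [LinearMap.comp_apply, LinearEquiv.coe_coe, uliftRep_apply]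
        exact counit_equivariant Q ρM a x.down)
      (by
        rintro ⟨σ, hσ, hθσ⟩
        refine hns ⟨e.toLinearMap.comp σ, counit Q ρM, ?_,
          fun a x => counit_equivariant Q ρM a x, hθσ⟩
        intro a m
        exact (congrArg (fun z => e z) (hσ a m)).trans rfl)
  refine ⟨(μ.comp e.symm.toLinearMap).comp (unitMap Q ρM), ?_, ?_⟩
  · intro q m
    exact (congrArg (fun z => μ (e.symm z)) (unitMap_equivariant Q ρM q m)).trans
      (hμ ↑q (e.symm (unitMap Q ρM m)))
  · ext m
    have h1 : g (μ (e.symm (unitMap Q ρM m)))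
        = (counit Q ρM).comp e.toLinearMap (e.symm (unitMap Q ρM m)) :=
      congrFun (congrArg DFunLike.coe hgμ) (e.symm (unitMap Q ρM m))
    exact h1.trans (counit_unitMap Q ρM m)
end
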